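/- Let V be an N-dimensional complex inner product space, A a self-adjoint endomorphism of V with eigenvalues α₁ ≥ α₂ ≥ … ≥ α_N listed in nonincreasing order with multiplicity, and χ_A the limit non-Archimedean norm of A, i.e. χ_A(v) = −lim_{t→∞} (1/t) · log ⟨exp(−tA) v, v⟩ for nonzero v and χ_A(0) = +∞. Then for every 1 ≤ i ≤ N, the i-th jumping number λ_i(χ_A) := max{λ ∈ ℝ : dim_ℂ {v ∈ V : χ_A(v) ≥ λ} ≥ i} equals α_i. -/

import Mathlib

/-!
In an orthonormal eigenbasis `b` of `A`, `⟨exp(-tA) v, v⟩ = ∑ⱼ |vⱼ|² e^{-t αⱼ}`, and as `t → ∞`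
this sum is squeezed between two positive multiples of `e^{-t m}` with `m` the least eigenvalue
on the support of `v`. Hence `χ_A(v) = m`, the superlevel set `{χ_A ≥ λ}` is the span of the
eigenvectors with `αⱼ ≥ λ`, and its dimension is `#{j | λ ≤ αⱼ}`; for antitone `α` the largest
`λ` making this count exceed `i` is `αᵢ`.
-/

open Filter Finset Topology

theorem NormedSpace.exp_apply_of_apply_eq_smul {V : Type*} [NormedAddCommGroup V]
    [NormedSpace ℂ V] [CompleteSpace V] {B : V →L[ℂ] V} {c : ℂ} {x : V} (h : B x = c • x) :
    NormedSpace.exp B x = Complex.exp c • x := by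
  have hpow : ∀ n : ℕ, (B ^ n) x = c ^ n • x := by
    intro n
    induction n with
    | zero => simp
    | succ n ih => rw [pow_succ, mul_apply_eq_comp, h, map_smul, ih, smul_smul,
        pow_succ, mul_comm]
  have hB := (NormedSpace.exp_series_hasSum_exp' (𝕂 := ℂ) B).mapL
    (ContinuousLinearMap.apply ℂ V x)
  have hc := (NormedSpace.exp_series_hasSum_exp' (𝕂 := ℂ) c).smul_const x
  rw [Complex.exp_eq_exp_ℂ]
  refine hB.unique (hc.congr_fun fun n => ?_)
  simp [hpow, smul_smul]

section LogLimit

open Real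

private lemma log_mul_exp {c : ℝ} (hc : 0 < c) (s : ℝ) : log (c * exp s) = log c + s := by
  rw [log_mul hc.ne' (exp_pos s).ne', log_exp]

theorem tendsto_neg_inv_mul_log_of_exp_bounds {f : ℝ → ℝ} {m c₁ c₂ : ℝ} (hc₁ : 0 < c₁)
    (hlow : ∀ t, c₁ * exp (-(t * m)) ≤ f t) (hup : ∀ᶠ t in atTop, f t ≤ c₂ * exp (-(t * m))) :
    Tendsto (fun t => -((1 / t) * log (f t))) atTop (𝓝 m) := by
  have hf : ∀ t, 0 < f t := fun t => (mul_pos hc₁ (exp_pos _)).trans_le (hlow t)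
  have hc₂ : 0 < c₂ := by
    obtain ⟨t, ht⟩ := hup.exists
    exact pos_of_mul_pos_left ((hf t).trans_le ht) (exp_pos _).le
  have hlim : ∀ c : ℝ, Tendsto (fun t : ℝ => m - c / t) atTop (𝓝 m) := fun c => by
    simpa using (tendsto_const_nhds (x := m)).sub (tendsto_const_nhds.div_atTop tendsto_id)
  -- `log (f t) + t * m` stays between `log c₁` and `log c₂`.
  have hrw : ∀ t, 0 < t → -((1 / t) * log (f t)) = m - (log (f t) + t * m) / t := by
    intro t ht
    field_simp
    ring
  refine tendsto_of_tendsto_of_tendsto_of_le_of_le' (hlim (log c₂)) (hlim (log c₁)) ?_ ?_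
  · filter_upwards [hup, eventually_gt_atTop 0] with t hft ht
    have hlog : log (f t) + t * m ≤ log c₂ := by
      have := log_le_log (hf t) hft
      rw [log_mul_exp hc₂] at this
      linarith
    rw [hrw t ht]
    gcongr
  · filter_upwards [eventually_gt_atTop 0] with t ht
    have hlog : log c₁ ≤ log (f t) + t * m := by
      have := log_le_log (mul_pos hc₁ (exp_pos _)) (hlow t)
      rw [log_mul_exp hc₁] at this
      linarith
    rw [hrw t ht]
    gcongr

theorem tendsto_neg_inv_mul_log_sum_mul_exp {ι : Type*} {s : Finset ι} (hs : s.Nonempty)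
    {w : ι → ℝ} (hw : ∀ j ∈ s, 0 < w j) (α : ι → ℝ) :
    Tendsto (fun t => -((1 / t) * log (∑ j ∈ s, w j * exp (-(t * α j)))))
      atTop (𝓝 (s.inf' hs α)) := by
  obtain ⟨j₀, hj₀, hmin⟩ := s.exists_mem_eq_inf' hs α
  refine tendsto_neg_inv_mul_log_of_exp_bounds (c₂ := ∑ j ∈ s, w j) (hw j₀ hj₀) (fun t => ?_) ?_
  · rw [hmin]
    exact single_le_sum (f := fun j => w j * exp (-(t * α j)))
      (fun j hj => (mul_pos (hw j hj) (exp_pos _)).le) hj₀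
  · filter_upwards [eventually_ge_atTop 0] with t ht
    rw [sum_mul]
    gcongr with j hj
    · exact (hw j hj).le
    · exact inf'_le α hj

end LogLimit

theorem Module.Basis.coe_span_image {ι R M : Type*} [CommSemiring R] [AddCommMonoid M]
    [Module R M] (b : Module.Basis ι R M) (s : Set ι) :
    (Submodule.span R (b '' s) : Set M) = {v | ∀ j, b.repr v j ≠ 0 → j ∈ s} := by
  ext v
  simp only [SetLike.mem_coe, b.mem_span_image, Set.subset_def, Finsupp.mem_support_iff,
    Set.mem_ofPred_eq]

theorem Module.Basis.finrank_span_image {ι K M : Type*} [Field K] [AddCommGroup M]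
    [Module K M] (b : Module.Basis ι K M) (s : Finset ι) :
    Module.finrank K (Submodule.span K (b '' s)) = #s := by
  rw [Set.image_eq_range]
  exact (finrank_span_eq_card (b.linearIndependent.comp _ Subtype.val_injective)).trans
    (Fintype.card_coe s)

theorem Antitone.isGreatest_setOf_succ_le_card_filter_le {β : Type*} [LinearOrder β] {N : ℕ}
    {α : Fin N → β} (hα : Antitone α) (i : Fin N) :
    IsGreatest {lam | (i : ℕ) + 1 ≤ #{j | lam ≤ α j}} (α i) := by
  constructor
  · calc (i : ℕ) + 1 = #(Iic i) := (Fin.card_Iic i).symm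
      _ ≤ #{j | α i ≤ α j} := card_le_card fun j hj => by simpa using hα (mem_Iic.1 hj)
  · intro lam hi
    by_contra! hlt
    have hsub : ({j | lam ≤ α j} : Finset (Fin N)) ⊆ Iio i := fun j hj => by
      simp only [mem_filter, mem_univ, true_and] at hj
      exact mem_Iio.2 (lt_of_not_ge fun hij => (hj.trans (hα hij)).not_gt hlt)
    have := (Set.mem_ofPred.1 hi).trans ((card_le_card hsub).trans (Fin.card_Iio i).le)
    omega

section Eigenbasis

variable {V ι : Type*} [NormedAddCommGroup V] [InnerProductSpace ℂ V] [Fintype ι]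
  {A : V →L[ℂ] V} {α : ι → ℝ} {b : OrthonormalBasis ι ℂ V}

theorem OrthonormalBasis.re_inner_exp_neg_smul_apply_self [CompleteSpace V]
    (hb : ∀ j, A (b j) = (α j : ℂ) • b j) (v : V) (t : ℝ) :
    (inner ℂ (NormedSpace.exp ((-(t : ℂ)) • A) v) v).re =
      ∑ j with b.repr v j ≠ 0, ‖b.repr v j‖ ^ 2 * Real.exp (-(t * α j)) := by
  have hexp : ∀ j, NormedSpace.exp ((-(t : ℂ)) • A) (b j) = (Real.exp (-(t * α j)) : ℂ) • b j :=
    fun j => by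
      rw [NormedSpace.exp_apply_of_apply_eq_smul (c := -(t : ℂ) * α j)
        (by rw [smul_apply, hb j, smul_smul])]
      push_cast
      ring_nf
  have hv : NormedSpace.exp ((-(t : ℂ)) • A) v =
      ∑ j, (b.repr v j * Real.exp (-(t * α j))) • b j := by
    conv_lhs => rw [← b.sum_repr v]
    simp only [map_sum, map_smul, hexp, smul_smul]
  rw [sum_filter_of_ne fun j _ h hj => by simp [hj] at h, hv, sum_inner, Complex.re_sum]
  refine sum_congr rfl fun j _ => ?_
  rw [inner_smul_left, b.repr_apply_apply, map_mul, Complex.conj_ofReal, mul_right_comm,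
    Complex.conj_mul', ← Complex.ofReal_pow, ← Complex.ofReal_mul, Complex.ofReal_re]

theorem OrthonormalBasis.coe_le_iff_of_tendsto [CompleteSpace V]
    (hb : ∀ j, A (b j) = (α j : ℂ) • b j) {χ : V → EReal} (hχ0 : χ 0 = ⊤)
    (hχ : ∀ v ≠ 0, Tendsto (fun t : ℝ =>
      ((-((1 / t) * Real.log (inner ℂ (NormedSpace.exp ((-(t : ℂ)) • A) v) v).re) : ℝ) : EReal))
      atTop (𝓝 (χ v)))
    (lam : ℝ) (v : V) : (lam : EReal) ≤ χ v ↔ ∀ j, b.repr v j ≠ 0 → lam ≤ α j := by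
  rcases eq_or_ne v 0 with rfl | hv
  · simp [hχ0]
  have hs : ({j | b.repr v j ≠ 0} : Finset ι).Nonempty := by
    by_contra! h
    refine hv (b.repr.injective ?_)
    ext j
    simpa using filter_eq_empty_iff.1 h (mem_univ j)
  have hw : ∀ j ∈ ({j | b.repr v j ≠ 0} : Finset ι), 0 < ‖b.repr v j‖ ^ 2 := fun j hj =>
    pow_pos (norm_pos_iff.2 (by simpa using hj)) 2
  have hχv : χ v = ((({j | b.repr v j ≠ 0} : Finset ι).inf' hs α : ℝ) : EReal) :=
    tendsto_nhds_unique (hχ v hv) <| EReal.tendsto_coe.2 <| by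
      simpa only [b.re_inner_exp_neg_smul_apply_self hb] using
        tendsto_neg_inv_mul_log_sum_mul_exp hs hw α
  simp [hχv]

end Eigenbasis

theorem statement14_general {V : Type*} [NormedAddCommGroup V] [InnerProductSpace ℂ V]
    [FiniteDimensional ℂ V] (N : ℕ)
    (A : V →L[ℂ] V)
    (α : Fin N → ℝ) (hα : Antitone α)
    (b : OrthonormalBasis (Fin N) ℂ V)
    (hb : ∀ i : Fin N, A (b i) = ((α i : ℝ) : ℂ) • b i)
    (χ : V → EReal) (hχ0 : χ 0 = ⊤)
    (hχ : ∀ v : V, v ≠ 0 →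
      Filter.Tendsto
        (fun t : ℝ =>
          ((-((1 / t) *
            Real.log ((inner ℂ ((NormedSpace.exp ((-(t : ℂ)) • A)) v) v : ℂ).re)) : ℝ) :
            EReal))
        Filter.atTop (nhds (χ v))) :
    ∀ i : Fin N,
      IsGreatest {lam : ℝ | ∃ W : Submodule ℂ V,
        (W : Set V) = {v : V | (lam : EReal) ≤ χ v} ∧
          (i : ℕ) + 1 ≤ Module.finrank ℂ W} (α i) := by
  intro i
  have hlevel : ∀ lam : ℝ, {v : V | (lam : EReal) ≤ χ v} =
      (Submodule.span ℂ (b.toBasis '' ↑({j | lam ≤ α j} : Finset (Fin N))) : Set V) := by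
    intro lam
    rw [b.toBasis.coe_span_image]
    ext v
    simp [b.coe_le_iff_of_tendsto hb hχ0 hχ]
  have hset : {lam : ℝ | ∃ W : Submodule ℂ V, (W : Set V) = {v | (lam : EReal) ≤ χ v} ∧
      (i : ℕ) + 1 ≤ Module.finrank ℂ W} = {lam | (i : ℕ) + 1 ≤ #{j | lam ≤ α j}} := by
    ext lam
    simp only [Set.mem_ofPred_eq, hlevel]
    constructor
    · rintro ⟨W, hW, hi⟩
      rwa [SetLike.coe_injective hW, b.toBasis.finrank_span_image] at hi
    · exact fun hi => ⟨_, rfl, by rwa [b.toBasis.finrank_span_image]⟩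
  rw [hset]
  exact hα.isGreatest_setOf_succ_le_card_filter_le i

/-- Let `V` be an `N`-dimensional complex inner product space, `A` a
self-adjoint endomorphism of `V` with eigenvalues `α₁ ≥ … ≥ α_N` listed nonincreasingly
with multiplicity (encoded by an orthonormal eigenbasis `b`), and `χ_A` the limit
non-Archimedean norm of `A`, i.e. `χ_A(v) = -lim_{t→∞} (1/t) log ⟨exp(-tA) v, v⟩` for
`v ≠ 0`, `χ_A(0) = +∞`.  Then for each `1 ≤ i ≤ N` the `i`-th jumping number
`λ_i(χ_A) = max {λ : dim_ℂ {v : χ_A(v) ≥ λ} ≥ i}` equals `α_i`. -/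
theorem statement14 {V : Type*} [NormedAddCommGroup V] [InnerProductSpace ℂ V]
    [FiniteDimensional ℂ V] (N : ℕ)
    (A : V →L[ℂ] V) (hA : ∀ x y : V, (inner ℂ (A x) y : ℂ) = inner ℂ x (A y))
    (α : Fin N → ℝ) (hα : Antitone α)
    (b : OrthonormalBasis (Fin N) ℂ V)
    (hb : ∀ i : Fin N, A (b i) = ((α i : ℝ) : ℂ) • b i)
    (χ : V → EReal) (hχ0 : χ 0 = ⊤)
    (hχ : ∀ v : V, v ≠ 0 →
      Filter.Tendsto
        (fun t : ℝ =>
          ((-((1 / t) *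
            Real.log ((inner ℂ ((NormedSpace.exp ((-(t : ℂ)) • A)) v) v : ℂ).re)) : ℝ) :
            EReal))
        Filter.atTop (nhds (χ v))) :
    ∀ i : Fin N,
      IsGreatest {lam : ℝ | ∃ W : Submodule ℂ V,
        (W : Set V) = {v : V | (lam : EReal) ≤ χ v} ∧
          (i : ℕ) + 1 ≤ Module.finrank ℂ W} (α i) :=
  statement14_general N A α hα b hb χ hχ0 hχ
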